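/- arXiv:1602.07154 — 4 statements merged into one kernel-verified Lean document; each statement's English description precedes it below -/
import Mathlib

section
/- In the graph H_z with even z ≥ 2, running the greedy ranking algorithm where u_1, ..., u_z arrive in order and each u_i is matched to its lowest-indexed unmatched neighbor v_j produces a matching of size exactly z/2. -/
/-!
The first `z/2` vertices `u_i` find their neighbour `v_{2i-1}` still free and take it, since
the greedy choices so far are exactly `v_1, v_3, …, v_{2i-3}`. Every later `u_i` has the single
neighbour `v_{2i-z-1}`, which is one of these odd vertices, so nothing more is matched.
-/

/-- Neighbourhood of `u_i` in the graph `H_z`. -/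
def HzNbrs (z i : ℕ) : Finset ℕ :=
  if i ≤ z / 2 then
    (Finset.Icc 1 z).filter (fun j => j = 2 * i - 1 ∨ j = 2 * i ∨ j = 2 * i + 1)
  else {2 * i - z - 1}

/-- Set of `V`-vertices matched after greedily processing `u_1, …, u_i` in order,
matching each `u_i` to its *lowest-indexed* unmatched neighbour. -/
def greedyMinMatched (z : ℕ) : ℕ → Finset ℕ
  | 0 => ∅
  | i + 1 =>
      let M := greedyMinMatched z i
      let av := HzNbrs z (i + 1) \ M
      if h : av.Nonempty then insert (av.min' h) M else M

open Finset

def firstOdds (n : ℕ) : Finset ℕ := (range n).image (fun k => 2 * k + 1)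

lemma mem_firstOdds {n j : ℕ} : j ∈ firstOdds n ↔ ∃ k < n, 2 * k + 1 = j := by
  simp [firstOdds]

lemma firstOdds_succ (n : ℕ) : firstOdds (n + 1) = insert (2 * n + 1) (firstOdds n) := by
  rw [firstOdds, range_add_one, image_insert, firstOdds]

lemma card_firstOdds (n : ℕ) : (firstOdds n).card = n := by
  rw [firstOdds, card_image_of_injective _ (fun a b h => by omega), card_range]

section greedy

variable {z i : ℕ}

lemma greedyMinMatched_succ_of_isLeast {a : ℕ}
    (h : IsLeast (↑(HzNbrs z (i + 1) \ greedyMinMatched z i) : Set ℕ) a) :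
    greedyMinMatched z (i + 1) = insert a (greedyMinMatched z i) := by
  have hne : (HzNbrs z (i + 1) \ greedyMinMatched z i).Nonempty := ⟨a, h.1⟩
  rw [greedyMinMatched, dif_pos hne, ← (isLeast_min' _ hne).unique h]

lemma greedyMinMatched_succ_of_subset (h : HzNbrs z (i + 1) ⊆ greedyMinMatched z i) :
    greedyMinMatched z (i + 1) = greedyMinMatched z i := by
  rw [greedyMinMatched, dif_neg (by simpa [sdiff_eq_empty_iff_subset] using h)]

lemma HzNbrs_of_lt_half (h : i < z / 2) :
    HzNbrs z (i + 1) =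
      (Icc 1 z).filter (fun j => j = 2 * i + 1 ∨ j = 2 * i + 2 ∨ j = 2 * i + 3) := by
  rw [HzNbrs, if_pos (by omega)]
  exact filter_congr fun j _ => by omega

lemma HzNbrs_of_half_le (h : z / 2 ≤ i) : HzNbrs z (i + 1) = {2 * (i + 1) - z - 1} := by
  rw [HzNbrs, if_neg (by omega)]

lemma isLeast_HzNbrs_sdiff_firstOdds (h : i < z / 2) :
    IsLeast (↑(HzNbrs z (i + 1) \ firstOdds i) : Set ℕ) (2 * i + 1) := by
  rw [HzNbrs_of_lt_half h]
  refine ⟨?_, fun j hj => ?_⟩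
  · simp only [coe_sdiff, Set.mem_sdiff, mem_coe, mem_filter, mem_Icc, mem_firstOdds]
    refine ⟨⟨⟨by omega, by omega⟩, Or.inl trivial⟩, ?_⟩
    rintro ⟨k, hk, hkj⟩
    omega
  · simp only [coe_sdiff, Set.mem_sdiff, mem_coe, mem_filter, mem_Icc] at hj
    omega

theorem greedyMinMatched_eq_firstOdds (hze : Even z) {i : ℕ} (hi : i ≤ z) :
    greedyMinMatched z i = firstOdds (min i (z / 2)) := by
  induction i with
  | zero => rfl
  | succ i ih =>
    rcases lt_or_ge i (z / 2) with hlt | hge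
    · have hM : greedyMinMatched z i = firstOdds i := by rw [ih (by omega), min_eq_left hlt.le]
      rw [greedyMinMatched_succ_of_isLeast (hM ▸ isLeast_HzNbrs_sdiff_firstOdds hlt), hM,
        min_eq_left (by omega), firstOdds_succ]
    · obtain ⟨m, rfl⟩ := hze
      rw [greedyMinMatched_succ_of_subset, ih (by omega), min_eq_right hge, min_eq_right (by omega)]
      rw [HzNbrs_of_half_le hge, ih (by omega), singleton_subset_iff, mem_firstOdds]
      exact ⟨i - m, by omega, by omega⟩

end greedy

theorem Hz_greedy_min_card_general (z : ℕ) (hze : Even z) :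
    (greedyMinMatched z z).card = z / 2 := by
  rw [greedyMinMatched_eq_firstOdds hze le_rfl, min_eq_right (Nat.div_le_self z 2), card_firstOdds]

/-- Greedy ranking with increasing ranks on `H_z` (even `z ≥ 2`) produces a matching
of size exactly `z/2`. -/
theorem Hz_greedy_min_card (z : ℕ) (hz : 2 ≤ z) (hze : Even z) :
    (greedyMinMatched z z).card = z / 2 :=
  Hz_greedy_min_card_general z hze
end

section
/- Let ε > 0 and let σ_1, ..., σ_k be permutations of [n] with k ≤ log₂ log₂ n − log₂ log₂ (1/ε) − 2. Then there exists a partition of [n] into sets C, B_1, B_2, ... such that |B_i| ≥ 1/ε for every i, |C| ≤ √n, and for every set B_i = {b_1 < b_2 < ... < b_p} and every permutation σ_j, the sequence σ_j(b_1), σ_j(b_2), ..., σ_j(b_p) is monotonic. -/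
/-!
Erdős–Szekeres gives, inside any set `S` of positions, a subset of size at least `√|S|` on which a
given permutation is monotone; applying it once per permutation yields a subset of size at least
`|S| ^ (1/2^k)` monotone under all of `σ_1, …, σ_k`. While more than `√n` positions remain, the
remaining set `R` therefore contains such a subset of size at least `n ^ (1/2^(k+1))`, which the
bound on `k` makes at least `1/ε`: remove it as a block and repeat. What is left is `C`.
-/

open Finset Real

section ErdosSzekeres

variable {α β : Type*} [LinearOrder α] [LinearOrder β] (f : α → β) (S : Finset α)

open scoped Classical in
noncomputable def incChainsEndingAt (x : α) : Finset (Finset α) :=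
  S.powerset.filter fun T : Finset α ↦ x ∈ T ∧ (∀ y ∈ T, y ≤ x) ∧ StrictMonoOn f ↑T

noncomputable def longestIncEndingAt (x : α) : ℕ :=
  (incChainsEndingAt f S x).sup card

variable {f S}

theorem mem_incChainsEndingAt {T : Finset α} {x : α} :
    T ∈ incChainsEndingAt f S x ↔ T ⊆ S ∧ x ∈ T ∧ (∀ y ∈ T, y ≤ x) ∧ StrictMonoOn f T := by
  classical
  simp [incChainsEndingAt]

theorem card_le_longestIncEndingAt {T : Finset α} {x : α} (hTS : T ⊆ S) (hxT : x ∈ T)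
    (hTx : ∀ y ∈ T, y ≤ x) (hT : StrictMonoOn f T) : #T ≤ longestIncEndingAt f S x :=
  le_sup (mem_incChainsEndingAt.2 ⟨hTS, hxT, hTx, hT⟩)

theorem singleton_mem_incChainsEndingAt {x : α} (hx : x ∈ S) :
    {x} ∈ incChainsEndingAt f S x :=
  mem_incChainsEndingAt.2
    ⟨singleton_subset_iff.2 hx, mem_singleton_self x, fun _ hy ↦ (mem_singleton.1 hy).le, by simp⟩

theorem one_le_longestIncEndingAt {x : α} (hx : x ∈ S) : 1 ≤ longestIncEndingAt f S x :=
  le_sup (f := card) (singleton_mem_incChainsEndingAt hx)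

theorem exists_card_eq_longestIncEndingAt {x : α} (hx : x ∈ S) :
    ∃ T ⊆ S, x ∈ T ∧ (∀ y ∈ T, y ≤ x) ∧ StrictMonoOn f T ∧ #T = longestIncEndingAt f S x := by
  obtain ⟨T, hT, hcard⟩ := exists_mem_eq_sup (incChainsEndingAt f S x)
    ⟨_, singleton_mem_incChainsEndingAt hx⟩ card
  obtain ⟨hTS, hxT, hTx, hmono⟩ := mem_incChainsEndingAt.1 hT
  exact ⟨T, hTS, hxT, hTx, hmono, hcard.symm⟩

theorem longestIncEndingAt_lt {x y : α} (hx : x ∈ S) (hy : y ∈ S) (hxy : x < y)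
    (hf : f x < f y) : longestIncEndingAt f S x < longestIncEndingAt f S y := by
  obtain ⟨T, hTS, hxT, hTx, hT, hcard⟩ := exists_card_eq_longestIncEndingAt (f := f) hx
  have hTy : ∀ z ∈ T, z ≤ y := fun z hz ↦ (hTx z hz).trans hxy.le
  have hyT : y ∉ T := fun hyT ↦ (hTx y hyT).not_gt hxy
  have hmono : StrictMonoOn f ↑(insert y T) := by
    rw [coe_insert, strictMonoOn_insert_iff_of_forall_le hTy]
    refine ⟨fun z hz _ ↦ ?_, hT⟩
    rcases (hTx z hz).lt_or_eq with hzx | rfl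
    · exact (hT hz hxT hzx).trans hf
    · exact hf
  calc longestIncEndingAt f S x < #(insert y T) := by rw [card_insert_of_notMem hyT, hcard]; omega
    _ ≤ longestIncEndingAt f S y :=
      card_le_longestIncEndingAt (insert_subset hy hTS) (mem_insert_self y T)
        (forall_mem_insert _ _ _ |>.2 ⟨le_rfl, hTy⟩) hmono

theorem strictAntiOn_filter_longestIncEndingAt_eq (hf : Set.InjOn f S) (v : ℕ) :
    StrictAntiOn f ↑({x ∈ S | longestIncEndingAt f S x = v}) := by
  intro x hx y hy hxy
  simp only [coe_filter, Set.mem_ofPred_eq] at hx hy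
  refine ((hf.ne_iff hx.1 hy.1).2 hxy.ne).symm.lt_of_le (not_lt.1 fun hlt ↦ ?_)
  exact (longestIncEndingAt_lt hx.1 hy.1 hxy hlt).ne (hx.2.trans hy.2.symm)

theorem exists_strictMonoOn_or_strictAntiOn_of_mul_lt_card {r s : ℕ} (hf : Set.InjOn f S)
    (hrs : r * s < #S) :
    (∃ T ⊆ S, r < #T ∧ StrictMonoOn f T) ∨ ∃ T ⊆ S, s < #T ∧ StrictAntiOn f T := by
  by_contra! ⟨hinc, hdec⟩
  have hmaps : ∀ x ∈ S, longestIncEndingAt f S x ∈ Icc 1 r := fun x hx ↦ by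
    obtain ⟨T, hTS, -, -, hT, hcard⟩ := exists_card_eq_longestIncEndingAt (f := f) hx
    exact mem_Icc.2 ⟨one_le_longestIncEndingAt hx, hcard ▸ not_lt.1 fun h ↦ hinc T hTS h hT⟩
  have hfibers : ∀ v ∈ Icc 1 r, #{x ∈ S | longestIncEndingAt f S x = v} ≤ s := fun v _ ↦
    not_lt.1 fun h ↦ hdec _ (filter_subset _ _) h (strictAntiOn_filter_longestIncEndingAt_eq hf v)
  have := card_le_mul_card_image_of_maps_to hmaps s hfibers
  simp only [Nat.card_Icc, add_tsub_cancel_right] at this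
  linarith

theorem exists_card_le_sq_strictMonoOn_or_strictAntiOn (hf : Set.InjOn f S) :
    ∃ T ⊆ S, #S ≤ #T ^ 2 ∧ (StrictMonoOn f T ∨ StrictAntiOn f T) := by
  rcases S.eq_empty_or_nonempty with rfl | hS
  · exact ⟨∅, subset_rfl, by simp, Or.inl (by simp [StrictMonoOn])⟩
  have hr := Nat.sqrt_le' (#S - 1)
  have hr' := Nat.lt_succ_sqrt' (#S - 1)
  generalize Nat.sqrt (#S - 1) = r at hr hr'
  have hrr : r * r < #S := by
    have := hS.card_pos
    rw [sq] at hr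
    omega
  have hS_le (T : Finset α) (hT : r < #T) : #S ≤ #T ^ 2 := by
    have := Nat.pow_le_pow_left (Nat.succ_le_of_lt hT) 2
    omega
  rcases exists_strictMonoOn_or_strictAntiOn_of_mul_lt_card hf hrr with
    ⟨T, hTS, hT, hmono⟩ | ⟨T, hTS, hT, hanti⟩
  · exact ⟨T, hTS, hS_le T hT, Or.inl hmono⟩
  · exact ⟨T, hTS, hS_le T hT, Or.inr hanti⟩

theorem exists_card_le_pow_forall_strictMonoOn_or_strictAntiOn {k : ℕ} (g : Fin k → α → β)
    (hg : ∀ j, Set.InjOn (g j) S) :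
    ∃ T ⊆ S, #S ≤ #T ^ 2 ^ k ∧ ∀ j, StrictMonoOn (g j) T ∨ StrictAntiOn (g j) T := by
  induction k generalizing S with
  | zero => exact ⟨S, subset_rfl, by simp, fun j ↦ j.elim0⟩
  | succ k ih =>
    obtain ⟨T₀, hT₀S, hST₀, hT₀⟩ := exists_card_le_sq_strictMonoOn_or_strictAntiOn (hg 0)
    obtain ⟨T, hTT₀, hT₀T, hT⟩ := ih (fun j ↦ g j.succ) (fun j ↦ (hg j.succ).mono hT₀S)
    refine ⟨T, hTT₀.trans hT₀S, ?_, Fin.cases ?_ hT⟩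
    · calc #S ≤ #T₀ ^ 2 := hST₀
        _ ≤ (#T ^ 2 ^ k) ^ 2 := Nat.pow_le_pow_left hT₀T 2
        _ = #T ^ 2 ^ (k + 1) := by rw [← pow_mul, pow_succ]
    · exact hT₀.imp (·.mono (coe_subset.2 hTT₀)) (·.mono (coe_subset.2 hTT₀))

end ErdosSzekeres

theorem exists_partition_of_forall_exists_subset {α : Type*} [DecidableEq α]
    (small good : Finset α → Prop) (h : ∀ R, ¬small R → ∃ T ⊆ R, T.Nonempty ∧ good T)
    (R : Finset α) :
    ∃ (C : Finset α) (P : Finset (Finset α)), small C ∧ (∀ B ∈ P, good B) ∧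
      (P : Set (Finset α)).PairwiseDisjoint id ∧ (∀ B ∈ P, Disjoint C B) ∧
      C ∪ P.biUnion id = R := by
  induction R using Finset.strongInduction with
  | H R ih =>
  by_cases hR : small R
  · exact ⟨R, ∅, hR, by simp, by simp, by simp, by simp⟩
  obtain ⟨T, hTR, hTne, hT⟩ := h R hR
  obtain ⟨C, P, hC, hP, hPdisj, hCP, hcover⟩ := ih (R \ T) (sdiff_ssubset hTR hTne)
  have hCsub : C ⊆ R \ T := hcover ▸ subset_union_left
  have hPsub : ∀ B ∈ P, B ⊆ R \ T := fun B hB ↦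
    hcover ▸ (subset_biUnion_of_mem id hB).trans subset_union_right
  refine ⟨C, insert T P, hC, forall_mem_insert _ _ _ |>.2 ⟨hT, hP⟩, ?_, ?_, ?_⟩
  · rw [coe_insert]
    exact hPdisj.insert fun B hB _ ↦ disjoint_sdiff.mono_right (hPsub B hB)
  · exact forall_mem_insert _ _ _ |>.2 ⟨sdiff_disjoint.mono_left hCsub, hCP⟩
  · rw [biUnion_insert, id, union_left_comm, hcover, union_sdiff_of_subset hTR]

theorem pow_two_pow_le_of_le_logb_logb {x y : ℝ} {k : ℕ} (hx : 0 < x) (hy : 1 < y)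
    (h : (k : ℝ) ≤ logb 2 (logb 2 y) - logb 2 (logb 2 x)) : x ^ 2 ^ k ≤ y := by
  rcases le_or_gt x 1 with hx1 | hx1
  · exact (pow_le_one₀ hx.le hx1).trans hy.le
  have hlx : 0 < logb 2 x := logb_pos one_lt_two hx1
  have hly : 0 < logb 2 y := logb_pos one_lt_two hy
  rw [← logb_le_logb one_lt_two (by positivity) (by linarith), logb_pow,
    ← logb_le_logb one_lt_two (by positivity) hly, logb_mul (by positivity) hlx.ne']
  push_cast
  rw [logb_pow, logb_self_eq_one one_lt_two]
  linarith

theorem exists_large_subset_forall_strictMonoOn_or_strictAntiOn {n k : ℕ} {ε : ℝ} (hε : 0 < ε)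
    (σ : Fin k → Equiv.Perm (Fin n))
    (hk : (k : ℝ) ≤ logb 2 (logb 2 n) - logb 2 (logb 2 (1 / ε)) - 2)
    (R : Finset (Fin n)) (hR : √n < #R) :
    ∃ T ⊆ R, 1 / ε < #T ∧ ∀ j, StrictMonoOn (σ j) T ∨ StrictAntiOn (σ j) T := by
  obtain ⟨T, hTR, hRT, hT⟩ :=
    exists_card_le_pow_forall_strictMonoOn_or_strictAntiOn (fun j ↦ σ j) (S := R)
      fun j ↦ (σ j).injective.injOn
  have hnR : (n : ℝ) < #R ^ 2 := (sqrt_lt' (by linarith [sqrt_nonneg n])).1 hR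
  have hRn : (#R : ℝ) ≤ n := by exact_mod_cast (card_le_univ R).trans_eq (Fintype.card_fin n)
  have hn : (1 : ℝ) < n := by nlinarith [sqrt_nonneg n, sq_sqrt (Nat.cast_nonneg (α := ℝ) n)]
  have hεn : (1 / ε) ^ 2 ^ (k + 1) ≤ n :=
    pow_two_pow_le_of_le_logb_logb (by positivity) hn (by push_cast; linarith)
  refine ⟨T, hTR, lt_of_pow_lt_pow_left₀ (2 ^ (k + 1)) (Nat.cast_nonneg _) ?_, hT⟩
  calc (1 / ε) ^ 2 ^ (k + 1) ≤ n := hεn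
    _ < #R ^ 2 := hnR
    _ ≤ ((#T : ℝ) ^ 2 ^ k) ^ 2 := by gcongr; exact_mod_cast hRT
    _ = (#T : ℝ) ^ 2 ^ (k + 1) := by rw [← pow_mul, pow_succ]

/-- Partition of `[n]` into a small set `C` and blocks `B_i` of size at least `1/ε`,
each monotone under every one of `k ≤ log log n - log log (1/ε) - 2` permutations. -/
theorem monotone_partition (n k : ℕ) (ε : ℝ) (hε : 0 < ε)
    (σ : Fin k → Equiv.Perm (Fin n))
    (hk : (k : ℝ) ≤ Real.logb 2 (Real.logb 2 n) - Real.logb 2 (Real.logb 2 (1 / ε)) - 2) :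
    ∃ (C : Finset (Fin n)) (P : Finset (Finset (Fin n))),
      (C.card : ℝ) ≤ Real.sqrt n ∧
      (∀ B ∈ P, (1 : ℝ) / ε ≤ B.card) ∧
      (P : Set (Finset (Fin n))).PairwiseDisjoint id ∧
      (∀ B ∈ P, Disjoint C B) ∧
      C ∪ P.biUnion id = Finset.univ ∧
      (∀ B ∈ P, ∀ j : Fin k, StrictMonoOn (σ j) ↑B ∨ StrictAntiOn (σ j) ↑B) := by
  have hsplit (R : Finset (Fin n)) (hR : ¬(#R : ℝ) ≤ √n) : ∃ T ⊆ R, T.Nonempty ∧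
      (1 / ε ≤ #T ∧ ∀ j, StrictMonoOn (σ j) T ∨ StrictAntiOn (σ j) T) := by
    obtain ⟨T, hTR, hεT, hT⟩ :=
      exists_large_subset_forall_strictMonoOn_or_strictAntiOn hε σ hk R (not_le.1 hR)
    have hTpos : (0 : ℝ) < #T := (one_div_pos.2 hε).trans hεT
    exact ⟨T, hTR, card_pos.1 (by exact_mod_cast hTpos), hεT.le, hT⟩
  obtain ⟨C, P, hC, hP, hPdisj, hCP, hcover⟩ :=
    exists_partition_of_forall_exists_subset _ _ hsplit univ
  exact ⟨C, P, hC, fun B hB ↦ (hP B hB).1, hPdisj, hCP, hcover, fun B hB ↦ (hP B hB).2⟩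
end

section
/- Suppose real numbers x_1, ..., x_q ∈ [0,1] satisfy x_1 ≥ 1 − 1/(q+1) and for all i ≥ 2, 1 − x_i ≤ (1/q)·∑_{j=1}^{i} x_j, where q ≥ 1 is an integer. Then ∑_{j=1}^{q} x_j ≥ q·(1 − (q/(q+1))^q). -/
/-! With `S i = ∑_{j ≤ i} x_j` and `r = q/(q+1)`, both hypotheses say `(q+1) S_{i+1} ≥ q (1 + S_i)`
(the first one for `i = 0`). The affine map `s ↦ r (1 + s)` is monotone with fixed point `q`, so
`q - S_i` shrinks at least by the factor `r` per step, starting from `q - S_0 = q`. -/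

theorem le_of_mul_one_add_le_succ_mul {c : ℝ} (hc : 0 ≤ c) {S : ℕ → ℝ} (h0 : 0 ≤ S 0) {n : ℕ}
    (hstep : ∀ i < n, c * (1 + S i) ≤ (c + 1) * S (i + 1)) :
    c * (1 - (c / (c + 1)) ^ n) ≤ S n := by
  induction n with
  | zero => simpa using h0
  | succ n ih =>
    have hS : c * (1 - (c / (c + 1)) ^ n) ≤ S n := ih fun i hi => hstep i (by omega)
    have hpow : (c + 1) * (c / (c + 1)) ^ (n + 1) = c * (c / (c + 1)) ^ n := by
      rw [pow_succ]; field_simp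
    have hc1 : 0 < c + 1 := by linarith
    refine le_of_mul_le_mul_left ?_ hc1
    calc (c + 1) * (c * (1 - (c / (c + 1)) ^ (n + 1)))
        = c * (1 + c * (1 - (c / (c + 1)) ^ n)) := by linear_combination (-c) * hpow
      _ ≤ c * (1 + S n) := by gcongr
      _ ≤ (c + 1) * S (n + 1) := hstep n (by omega)

theorem category_probabilities_sum_general (q : ℕ) (x : ℕ → ℝ)
    (hx1 : 1 - 1 / ((q : ℝ) + 1) ≤ x 1)
    (hrec : ∀ i : ℕ, 2 ≤ i → i ≤ q →
      1 - x i ≤ (1 / (q : ℝ)) * ∑ j ∈ Finset.Icc 1 i, x j) :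
    (q : ℝ) * (1 - ((q : ℝ) / (q + 1)) ^ q) ≤ ∑ j ∈ Finset.Icc 1 q, x j := by
  refine le_of_mul_one_add_le_succ_mul (S := fun n => ∑ j ∈ Finset.Icc 1 n, x j) q.cast_nonneg
    (by simp) fun i hi => ?_
  rw [Finset.sum_Icc_succ_top (by omega)]
  rcases Nat.eq_zero_or_pos i with rfl | hi0
  · have hq1 : (0 : ℝ) < q + 1 := by positivity
    simp only [Finset.Icc_eq_empty_of_lt one_pos, Finset.sum_empty, zero_add]
    rw [one_sub_div hq1.ne', add_sub_cancel_right, div_le_iff₀ hq1] at hx1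
    linarith
  · have hq : (0 : ℝ) < q := by exact_mod_cast (show 0 < q by omega)
    have h := hrec (i + 1) (by omega) hi
    rw [Finset.sum_Icc_succ_top (by omega), one_div, ← div_eq_inv_mul, le_div_iff₀ hq] at h
    linarith

/-- If `x_1, …, x_q ∈ [0,1]` satisfy `x_1 ≥ 1 - 1/(q+1)` and
`1 - x_i ≤ (1/q) ∑_{j=1}^{i} x_j` for `2 ≤ i ≤ q`, then
`∑_{j=1}^{q} x_j ≥ q (1 - (q/(q+1))^q)`. -/
theorem category_probabilities_sum (q : ℕ) (hq : 1 ≤ q) (x : ℕ → ℝ)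
    (hx01 : ∀ i ∈ Finset.Icc 1 q, x i ∈ Set.Icc (0 : ℝ) 1)
    (hx1 : 1 - 1 / ((q : ℝ) + 1) ≤ x 1)
    (hrec : ∀ i : ℕ, 2 ≤ i → i ≤ q →
      1 - x i ≤ (1 / (q : ℝ)) * ∑ j ∈ Finset.Icc 1 i, x j) :
    (q : ℝ) * (1 - ((q : ℝ) / (q + 1)) ^ q) ≤ ∑ j ∈ Finset.Icc 1 q, x j :=
  category_probabilities_sum_general q x hx1 hrec
end

section
/- Let A be an I × R matrix of reals in [0,1] such that every row averages at least E ∈ (0,1]. Then there exists a column j and a set H of at least (εE/(1 − E + εE))·I rows such that A_{i,j} ≥ (1 − ε)E for every i ∈ H, for any fixed ε ∈ (0,1). -/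
/-!
Since the entries are at most `1`, a reverse Markov bound shows that in every row at least a
`εE/(1-E+εE)` fraction of the entries are `≥ (1-ε)E`. Double counting these good
(row, column) pairs, some column is good on at least the same fraction of the rows.
-/

open Finset

theorem Finset.sum_sub_card_mul_le_mul_card_filter {ι : Type*} (s : Finset ι) (f : ι → ℝ)
    (t : ℝ) (hf : ∀ j ∈ s, f j ≤ 1) :
    ∑ j ∈ s, f j - #s * t ≤ (1 - t) * #{j ∈ s | t ≤ f j} := by
  have hbound : ∑ j ∈ s, f j ≤ ∑ j ∈ s, if t ≤ f j then 1 else t :=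
    sum_le_sum fun j hj => by
      split_ifs with h
      exacts [hf j hj, (not_le.mp h).le]
  have hcard : (#{j ∈ s | t ≤ f j} : ℝ) + #{j ∈ s | ¬t ≤ f j} = #s := by
    exact_mod_cast card_filter_add_card_filter_not _
  rw [sum_ite, sum_const, sum_const, nsmul_eq_mul, nsmul_eq_mul, mul_one] at hbound
  linear_combination hbound + t * hcard

theorem exists_mul_card_le_card_filter_of_forall {α β : Type*} [Fintype α] [Fintype β]
    [Nonempty β] (P : α → β → Prop) [∀ a b, Decidable (P a b)] (c : ℝ)
    (hrow : ∀ a, c * Fintype.card β ≤ #{b | P a b}) :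
    ∃ b, c * Fintype.card α ≤ #{a | P a b} := by
  have htotal : ∑ _b : β, c * Fintype.card α ≤ ∑ b, (#{a | P a b} : ℝ) :=
    calc ∑ _b : β, c * Fintype.card α = ∑ _a : α, c * Fintype.card β := by
          simp only [sum_const, card_univ, nsmul_eq_mul]; ring
      _ ≤ ∑ a, (#{b | P a b} : ℝ) := sum_le_sum fun a _ => hrow a
      _ = ∑ b, (#{a | P a b} : ℝ) := by
          simp only [card_filter, Nat.cast_sum]; exact sum_comm
  obtain ⟨b, -, hb⟩ := exists_le_of_sum_le univ_nonempty htotal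
  exact ⟨b, hb⟩

theorem good_column_exists_general (I R : ℕ) (hR : 0 < R)
    (A : Fin I → Fin R → ℝ) (E ε : ℝ)
    (hE : 0 < E) (hE1 : E ≤ 1) (hε : 0 < ε)
    (hA01 : ∀ i j, A i j ∈ Set.Icc (0 : ℝ) 1)
    (hrow : ∀ i, E ≤ (1 / (R : ℝ)) * ∑ j, A i j) :
    ∃ j : Fin R, ∃ H : Finset (Fin I),
      (ε * E / (1 - E + ε * E)) * I ≤ H.card ∧
      ∀ i ∈ H, (1 - ε) * E ≤ A i j := by
  have : Nonempty (Fin R) := ⟨⟨0, hR⟩⟩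
  have hRpos : (0 : ℝ) < R := by exact_mod_cast hR
  have hd : 0 < 1 - E + ε * E := by linarith [mul_pos hε hE]
  have hgood_row : ∀ i, ε * E / (1 - E + ε * E) * Fintype.card (Fin R) ≤
      #{j | (1 - ε) * E ≤ A i j} := by
    intro i
    have hmarkov := sum_sub_card_mul_le_mul_card_filter univ (A i) ((1 - ε) * E)
      fun j _ => (hA01 i j).2
    have hsum : R * E ≤ ∑ j, A i j := by
      have := hrow i
      rwa [one_div, ← div_eq_inv_mul, le_div_iff₀ hRpos, mul_comm] at this
    simp only [card_univ, Fintype.card_fin] at hmarkov ⊢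
    rw [div_mul_eq_mul_div, div_le_iff₀ hd]
    linarith
  obtain ⟨j, hj⟩ := exists_mul_card_le_card_filter_of_forall
    (fun i j => (1 - ε) * E ≤ A i j) _ hgood_row
  exact ⟨j, ({i | (1 - ε) * E ≤ A i j} : Finset _), by simpa using hj,
    fun i hi => (mem_filter.mp hi).2⟩

/-- Counting step of the randomized-to-advice conversion: if every row of a `[0,1]`-valued
`I × R` matrix averages at least `E`, then some column is at least `(1-ε)E` on at least a
`εE/(1-E+εE)` fraction of the rows. -/
theorem good_column_exists (I R : ℕ) (hI : 0 < I) (hR : 0 < R)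
    (A : Fin I → Fin R → ℝ) (E ε : ℝ)
    (hE : 0 < E) (hE1 : E ≤ 1) (hε : 0 < ε) (hε1 : ε < 1)
    (hA01 : ∀ i j, A i j ∈ Set.Icc (0 : ℝ) 1)
    (hrow : ∀ i, E ≤ (1 / (R : ℝ)) * ∑ j, A i j) :
    ∃ j : Fin R, ∃ H : Finset (Fin I),
      (ε * E / (1 - E + ε * E)) * I ≤ H.card ∧
      ∀ i ∈ H, (1 - ε) * E ≤ A i j :=
  good_column_exists_general I R hR A E ε hE hE1 hε hA01 hrow
end
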